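/- arXiv:2311.17664 — 4 statements merged into one kernel-verified Lean document; each statement's English description precedes it below -/
import Mathlib

section
/- Let S be a 1-stable commutative semiring with exactly L elements and A an n×n matrix over S. Then A^{(k+1)} = A^{(k)} for every k ≥ ⌈2 log₂ L⌉ · n. -/
/-!
Entry `(i, j)` of `A ^ h` is the sum of the weights of the walks of length `h` from `i` to `j`.
A walk of length `k + 1 > 2n` visits some vertex three times, so its weight factors as
`p * c₁ * c₂ * z` with `c₁`, `c₂` the weights of two cycles. The three shortcuts `p * z`,
`p * c₁ * z`, `p * c₂ * z` are shorter walks from `i` to `j`, and 1-stability gives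
`1 + a + b + a * b = 1 + a + b` (and `1 + a + a ^ 2 = 1 + a` when the two cycles coincide), so the
long walk is absorbed by `A^{(k)}`. Finally `⌈2 log₂ L⌉ ≥ 2` unless `S` is trivial.
-/

def IsOneStable (S : Type*) [CommSemiring S] : Prop :=
  ∀ u : S, 1 + u = 1 + u + u ^ 2

open Finset

namespace IsOneStable

variable {S : Type*} [CommSemiring S]

theorem add_add_sq (hS : IsOneStable S) (a r : S) : 1 + a + r + a ^ 2 = 1 + a + r := by
  rw [add_right_comm, ← hS a]

theorem one_add_add_add_mul (hS : IsOneStable S) (a b : S) :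
    1 + a + b + a * b = 1 + a + b := by
  have hsq : 1 + a + b + (a ^ 2 + b ^ 2) = 1 + a + b := by
    rw [← add_assoc, hS.add_add_sq, add_right_comm 1 a b, hS.add_add_sq, add_right_comm]
  have htwo : 1 + a + b + 2 * (a * b) = 1 + a + b := by
    calc 1 + a + b + 2 * (a * b) = 1 + a + b + (a ^ 2 + b ^ 2) + 2 * (a * b) := by rw [hsq]
      _ = 1 + (a + b) + (a + b) ^ 2 := by ring
      _ = 1 + a + b := by rw [← hS, add_assoc]
  have hthree : (3 : S) = 2 := by
    simpa [one_add_one_eq_two, two_add_one_eq_three] using (hS 1).symm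
  calc 1 + a + b + a * b = 1 + a + b + 2 * (a * b) + a * b := by rw [htwo]
    _ = 1 + a + b + 3 * (a * b) := by ring
    _ = 1 + a + b := by rw [hthree, htwo]

end IsOneStable

theorem Finset.add_sum_eq_self_of_forall {β S : Type*} [AddCommMonoid S] {s : S}
    {T : Finset β} {f : β → S} (h : ∀ b ∈ T, s + f b = s) : s + ∑ b ∈ T, f b = s :=
  sum_induction f (fun x => s + x = s) (fun x y hx hy => by rw [← add_assoc, hx, hy])
    (add_zero s) h

theorem Finset.sum_add_eq_of_subset {β S : Type*} [AddCommMonoid S] [DecidableEq β]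
    {U T : Finset β} (hUT : U ⊆ T) {f : β → S} {w : S}
    (hU : ∑ b ∈ U, f b + w = ∑ b ∈ U, f b) : ∑ b ∈ T, f b + w = ∑ b ∈ T, f b := by
  rw [← sum_sdiff hUT, add_assoc, hU]

namespace List

theorem getLast?_cons_append_cons {α : Type*} (v : α) (X Z : List α) :
    (v :: (X ++ v :: Z)).getLast? = (v :: Z).getLast? :=
  getLast?_append_cons (v :: X) v Z

variable {α : Type*} [DecidableEq α]

theorem exists_eq_append_cons_of_lt_count {v : α} {m : ℕ} :
    ∀ {l : List α}, m < l.count v → ∃ P T, l = P ++ v :: T ∧ m ≤ T.count v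
  | [], h => by simp at h
  | u :: t, h => by
    by_cases huv : u = v
    · subst huv
      exact ⟨[], t, rfl, by rw [count_cons_self] at h; omega⟩
    · rw [count_cons_of_ne huv] at h
      obtain ⟨P, T, rfl, hT⟩ := exists_eq_append_cons_of_lt_count h
      exact ⟨u :: P, T, rfl, hT⟩

theorem exists_eq_append_cons_append_cons_append_cons {v : α} {l : List α}
    (h : 3 ≤ l.count v) : ∃ P X Y Z, l = P ++ v :: (X ++ v :: (Y ++ v :: Z)) := by
  obtain ⟨P, T, rfl, hT⟩ := exists_eq_append_cons_of_lt_count h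
  obtain ⟨X, T', rfl, hT'⟩ := exists_eq_append_cons_of_lt_count hT
  obtain ⟨Y, Z, rfl, -⟩ := exists_eq_append_cons_of_lt_count hT'
  exact ⟨P, X, Y, Z, rfl⟩

theorem exists_three_le_count_of_two_mul_card_lt_length [Fintype α] {l : List α}
    (h : 2 * Fintype.card α < l.length) : ∃ v, 3 ≤ l.count v := by
  by_contra! hc
  have : l.length ≤ 2 * Fintype.card α := calc
    l.length = ∑ v, l.count v := by
      simpa using (Multiset.sum_count_eq_card (s := univ) (m := (l : Multiset α)) (by simp)).symm
    _ ≤ ∑ _v : α, 2 := Finset.sum_le_sum fun v _ => Nat.le_of_lt_succ (hc v)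
    _ = 2 * Fintype.card α := by simp [mul_comm]
  omega

end List

namespace Matrix

section Semiring

variable {ι S : Type*} [Semiring S]

def walkWeight (A : Matrix ι ι S) : List ι → S
  | [] => 1
  | [_] => 1
  | u :: v :: t => A u v * walkWeight A (v :: t)

theorem walkWeight_append_cons (A : Matrix ι ι S) :
    ∀ (P : List ι) (v : ι) (t : List ι),
      walkWeight A (P ++ v :: t) = walkWeight A (P ++ [v]) * walkWeight A (v :: t)
  | [], _, _ => by simp [walkWeight]
  | [_], _, _ => by simp [walkWeight]
  | u :: u' :: P, v, t => by
    show A u u' * walkWeight A ((u' :: P) ++ v :: t)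
      = A u u' * walkWeight A ((u' :: P) ++ [v]) * walkWeight A (v :: t)
    rw [walkWeight_append_cons A (u' :: P), mul_assoc]

variable [Fintype ι] [DecidableEq ι]

def walks : ℕ → ι → ι → Finset (List ι)
  | 0, i, j => if i = j then {[i]} else ∅
  | h + 1, i, j => univ.biUnion fun v => (walks h v j).image (i :: ·)

theorem mem_walks {h : ℕ} {i j : ι} {l : List ι} :
    l ∈ walks h i j ↔ l.length = h + 1 ∧ l.head? = some i ∧ l.getLast? = some j := by
  induction h generalizing i l with
  | zero =>
    rw [List.length_eq_one_iff]
    by_cases hij : i = j <;> aesop (add simp walks)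
  | succ h ih =>
    cases l with
    | nil => simp [walks]
    | cons u t =>
      cases t <;> simp [walks, ih, eq_comm, and_comm, and_left_comm]

theorem pow_apply_eq_sum_walks (A : Matrix ι ι S) (h : ℕ) (i j : ι) :
    (A ^ h) i j = ∑ l ∈ walks h i j, walkWeight A l := by
  induction h generalizing i with
  | zero => by_cases hij : i = j <;> simp [walks, hij, walkWeight]
  | succ h ih =>
    have hdisj :
        Set.PairwiseDisjoint ↑(univ : Finset ι) fun v => (walks h v j).image (i :: ·) := by
      intro v₁ _ v₂ _ hne
      simp only [Function.onFun, disjoint_left, mem_image]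
      rintro _ ⟨t, ht, rfl⟩ ⟨t', ht', heq⟩
      cases List.cons_injective heq
      exact hne (Option.some.inj ((mem_walks.1 ht).2.1.symm.trans (mem_walks.1 ht').2.1))
    rw [pow_succ', mul_apply, walks, sum_biUnion hdisj]
    refine sum_congr rfl fun v _ => ?_
    rw [sum_image fun _ _ _ _ h => List.cons_injective h, ih, mul_sum]
    refine sum_congr rfl fun t ht => ?_
    obtain ⟨t, rfl⟩ := List.head?_eq_some_iff.1 (mem_walks.1 ht).2.1
    rfl

def walksUpTo (m : ℕ) (i j : ι) : Finset (List ι) :=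
  (range m).biUnion (walks · i j)

theorem mem_walksUpTo {m : ℕ} {i j : ι} {l : List ι} :
    l ∈ walksUpTo m i j ↔ l.length ≤ m ∧ l.head? = some i ∧ l.getLast? = some j := by
  simp only [walksUpTo, mem_biUnion, mem_range, mem_walks]
  constructor
  · rintro ⟨h, hh, hl, hi, hj⟩
    exact ⟨by omega, hi, hj⟩
  · rintro ⟨hl, hi, hj⟩
    obtain ⟨t, rfl⟩ := List.head?_eq_some_iff.1 hi
    exact ⟨t.length, by simpa using hl, by simp, hi, hj⟩

theorem sum_range_pow_apply_eq_sum_walksUpTo (A : Matrix ι ι S) (m : ℕ) (i j : ι) :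
    (∑ h ∈ range m, A ^ h) i j = ∑ l ∈ walksUpTo m i j, walkWeight A l := by
  rw [sum_apply, walksUpTo, sum_biUnion]
  · exact sum_congr rfl fun h _ => pow_apply_eq_sum_walks A h i j
  · intro h₁ _ h₂ _ hne
    simp only [Function.onFun, disjoint_left]
    intro l hl₁ hl₂
    exact hne (by simpa using (mem_walks.1 hl₁).1.symm.trans (mem_walks.1 hl₂).1)

end Semiring

variable {ι S : Type*} [DecidableEq ι] [CommSemiring S]

theorem sum_add_walkWeight_eq_of_shortcuts_subset (hS : IsOneStable S) (A : Matrix ι ι S)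
    {T : Finset (List ι)} {P X Y Z : List ι} {v : ι}
    (hT : {P ++ v :: Z, P ++ v :: (X ++ v :: Z), P ++ v :: (Y ++ v :: Z)} ⊆ T) :
    ∑ l ∈ T, walkWeight A l + walkWeight A (P ++ v :: (X ++ v :: (Y ++ v :: Z))) =
      ∑ l ∈ T, walkWeight A l := by
  refine sum_add_eq_of_subset hT ?_
  have hw : ∀ t, walkWeight A (P ++ v :: t) = walkWeight A (P ++ [v]) * walkWeight A (v :: t) :=
    walkWeight_append_cons A P v
  have hc : ∀ C t, walkWeight A (v :: (C ++ v :: t)) =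
      walkWeight A (v :: C ++ [v]) * walkWeight A (v :: t) :=
    fun C => walkWeight_append_cons A (v :: C) v
  have hne : ∀ C, P ++ v :: Z ≠ P ++ v :: (C ++ v :: Z) := fun C h => by
    have := congrArg List.length h
    simp only [List.length_append, List.length_cons] at this
    omega
  set p := walkWeight A (P ++ [v])
  set z := walkWeight A (v :: Z)
  obtain rfl | hXY := eq_or_ne X Y
  · rw [insert_eq_of_mem (mem_singleton_self _), sum_pair (hne X), hw Z, hw (X ++ v :: Z),
      hw (X ++ v :: (X ++ v :: Z)), hc X (X ++ v :: Z), hc X Z]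
    set c := walkWeight A (v :: X ++ [v])
    calc p * z + p * (c * z) + p * (c * (c * z)) = p * z * (1 + c + c ^ 2) := by ring
      _ = p * z * (1 + c) := by rw [← hS c]
      _ = p * z + p * (c * z) := by ring
  · rw [sum_insert (by simp [hne]), sum_pair (by simpa using hXY), hw Z, hw (X ++ v :: Z),
      hw (Y ++ v :: Z), hw (X ++ v :: (Y ++ v :: Z)), hc X (Y ++ v :: Z), hc X Z, hc Y Z]
    set c₁ := walkWeight A (v :: X ++ [v])
    set c₂ := walkWeight A (v :: Y ++ [v])
    calc p * z + (p * (c₁ * z) + p * (c₂ * z)) + p * (c₁ * (c₂ * z))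
        = p * z * (1 + c₁ + c₂ + c₁ * c₂) := by ring
      _ = p * z * (1 + c₁ + c₂) := by rw [hS.one_add_add_add_mul]
      _ = p * z + (p * (c₁ * z) + p * (c₂ * z)) := by ring

variable [Fintype ι]

theorem sum_walksUpTo_add_walkWeight_eq (hS : IsOneStable S) (A : Matrix ι ι S) {k : ℕ}
    (hk : 2 * Fintype.card ι ≤ k) {i j : ι} {l : List ι} (hl : l ∈ walks (k + 1) i j) :
    ∑ l' ∈ walksUpTo (k + 1) i j, walkWeight A l' + walkWeight A l =
      ∑ l' ∈ walksUpTo (k + 1) i j, walkWeight A l' := by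
  obtain ⟨hlen, hi, hj⟩ := mem_walks.1 hl
  obtain ⟨v, hv⟩ := List.exists_three_le_count_of_two_mul_card_lt_length (l := l) (by omega)
  obtain ⟨P, X, Y, Z, rfl⟩ := List.exists_eq_append_cons_append_cons_append_cons hv
  refine sum_add_walkWeight_eq_of_shortcuts_subset hS A ?_
  rw [List.getLast?_append_cons, List.getLast?_cons_append_cons,
    List.getLast?_cons_append_cons] at hj
  have hmem : ∀ t, (P ++ v :: t).length ≤ k + 1 → (v :: t).getLast? = some j →
      P ++ v :: t ∈ walksUpTo (k + 1) i j := fun t hlen' hlast =>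
    mem_walksUpTo.2 ⟨hlen', by simpa using hi, by rwa [List.getLast?_append_cons]⟩
  simp only [List.length_append, List.length_cons] at hlen
  simp only [insert_subset_iff, singleton_subset_iff]
  have hcycle : ∀ C, (v :: (C ++ v :: Z)).getLast? = some j :=
    fun C => (List.getLast?_cons_append_cons ..).trans hj
  refine ⟨hmem Z ?_ hj, hmem _ ?_ (hcycle X), hmem _ ?_ (hcycle Y)⟩ <;>
    simp only [List.length_append, List.length_cons] <;> omega

theorem sum_range_pow_succ_eq_of_isOneStable (hS : IsOneStable S) (A : Matrix ι ι S) {k : ℕ}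
    (hk : 2 * Fintype.card ι ≤ k) :
    ∑ h ∈ range (k + 2), A ^ h = ∑ h ∈ range (k + 1), A ^ h := by
  ext i j
  rw [sum_range_succ, add_apply, sum_range_pow_apply_eq_sum_walksUpTo, pow_apply_eq_sum_walks]
  exact add_sum_eq_self_of_forall fun l hl => sum_walksUpTo_add_walkWeight_eq hS A hk hl

end Matrix

/-- Over a `1`-stable commutative semiring with exactly `L` elements, any `n × n` matrix `A`
satisfies `A^{(k+1)} = A^{(k)}` for every `k ≥ ⌈2 log₂ L⌉ · n`,
where `A^{(m)} = Σ_{h=0}^{m} A^h`. -/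
theorem linear_datalog_converges_one_stable (S : Type*) [CommSemiring S] [Fintype S]
    (n L : ℕ) (hL : Fintype.card S = L) (hS : IsOneStable S)
    (A : Matrix (Fin n) (Fin n) S) (k : ℕ)
    (hk : ⌈(2 * Real.logb 2 L : ℝ)⌉₊ * n ≤ k) :
    (∑ h ∈ Finset.range (k + 2), A ^ h) = (∑ h ∈ Finset.range (k + 1), A ^ h) := by
  rcases le_or_gt L 1 with hL1 | hL1
  · have : Subsingleton S := Fintype.card_le_one_iff_subsingleton.1 (hL ▸ hL1)
    exact Subsingleton.elim _ _
  have hlog : 1 ≤ Real.logb 2 L := by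
    rw [Real.le_logb_iff_rpow_le one_lt_two (by positivity), Real.rpow_one]
    exact_mod_cast hL1
  have hceil : 2 ≤ ⌈(2 * Real.logb 2 L : ℝ)⌉₊ := Nat.lt_ceil.2 (by push_cast; linarith)
  refine Matrix.sum_range_pow_succ_eq_of_isOneStable hS A (le_trans ?_ hk)
  simpa using Nat.mul_le_mul_right n hceil
end

section
/- Let S be a naturally ordered commutative semiring in which every chain in the natural order has length at most L. Then for any n×n matrix A over S and any vector x ∈ S^n, there exists k ≤ nL with A^{(k)} x = A^{(k+1)} x, where A^{(m)} = Σ_{h=0}^m A^h. -/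
/-!
The partial sums `A^{(m)} x` increase in the natural order, since `A^{(m+1)} x = A^{(m)} x + A^{m+1} x`.
If the indices `k₀ < ⋯ < k_L` are strict steps of a monotone sequence `y`, then
`y k₀ < y (k₀ + 1) ≤ y k₁ < ⋯ < y (k_L + 1)` is a chain of length `L + 1`, so each coordinate of
`A^{(m)} x` has at most `L` strict steps, and the vector has at most `nL` of them. Among the
`nL + 1` indices `0, …, nL` one is therefore not a strict step.
-/

open Finset

abbrev naturalPartialOrder (M : Type*) [AddMonoid M]
    (hanti : ∀ a b : M, (∃ z, a + z = b) → (∃ z, b + z = a) → a = b) : PartialOrder M where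
  le a b := ∃ z, a + z = b
  le_refl a := ⟨0, add_zero a⟩
  le_trans := fun a b c ⟨z, hz⟩ ⟨w, hw⟩ => ⟨z + w, by rw [← add_assoc, hz, hw]⟩
  le_antisymm := hanti

section ChainBound

variable {α : Type*} [PartialOrder α] {L : ℕ}

theorem Monotone.card_le_of_forall_ne_succ {y : ℕ → α} (hy : Monotone y)
    (hchain : ∀ c : Fin (L + 2) → α, ¬StrictMono c) {s : Finset ℕ}
    (hs : ∀ k ∈ s, y k ≠ y (k + 1)) : #s ≤ L := by
  by_contra! hL
  set e := s.orderEmbOfCardLe hL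
  have hstep (j : Fin (L + 1)) : y (e j) < y (e j + 1) :=
    (hy (e j).le_succ).lt_of_ne (hs _ (s.orderEmbOfCardLe_mem hL j))
  exact hchain (Matrix.vecCons (y (e 0)) fun j => y (e j + 1)) <|
    strictMono_vecCons.2 ⟨hstep 0, fun j j' hjj' => (hy (e.strictMono hjj')).trans_lt (hstep j')⟩

theorem Monotone.exists_le_card_mul_eq_succ {ι : Type*} [Fintype ι] {y : ℕ → ι → α}
    (hy : Monotone y) (hchain : ∀ c : Fin (L + 2) → α, ¬StrictMono c) :
    ∃ k ≤ Fintype.card ι * L, y k = y (k + 1) := by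
  classical
  by_contra! hne
  set N := Fintype.card ι * L
  have hcover : range (N + 1) ⊆
      univ.biUnion fun i => (range (N + 1)).filter fun k => y k i ≠ y (k + 1) i := by
    intro k hk
    obtain ⟨i, hi⟩ := Function.ne_iff.1 (hne k (Nat.lt_succ_iff.1 (mem_range.1 hk)))
    exact mem_biUnion.2 ⟨i, mem_univ i, mem_filter.2 ⟨hk, hi⟩⟩
  have hcard := (card_le_card hcover).trans <| card_biUnion_le_card_mul _ _ L fun i _ =>
    Monotone.card_le_of_forall_ne_succ (fun a b hab => hy hab i) hchain fun k hk =>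
      (mem_filter.1 hk).2
  simp only [card_range, card_univ] at hcard
  omega

end ChainBound

/-- Over a naturally ordered commutative semiring (the relation `x ⪯ y ↔ ∃ z, x + z = y`
is antisymmetric) in which every chain of the natural order has length at most `L`
(no chain with `L+1` strict steps exists), for any `n × n` matrix `A` and any vector `x`
there exists `k ≤ nL` with `A^{(k)} x = A^{(k+1)} x`, where `A^{(m)} = Σ_{h=0}^{m} A^h`. -/
theorem naturally_ordered_convergence (S : Type*) [CommSemiring S] (L : ℕ)
    (hord : ∀ x y : S, (∃ z, x + z = y) → (∃ z, y + z = x) → x = y)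
    (hchain : ¬ ∃ c : Fin (L + 2) → S, ∀ i : Fin (L + 1),
        (∃ z, c i.castSucc + z = c i.succ) ∧ c i.castSucc ≠ c i.succ)
    (n : ℕ) (A : Matrix (Fin n) (Fin n) S) (x : Fin n → S) :
    ∃ k ≤ n * L,
      (∑ h ∈ Finset.range (k + 1), A ^ h).mulVec x
        = (∑ h ∈ Finset.range (k + 2), A ^ h).mulVec x := by
  let _ : PartialOrder S := naturalPartialOrder S hord
  have hchain' (c : Fin (L + 2) → S) : ¬StrictMono c := fun hc =>
    hchain ⟨c, fun i => lt_iff_le_and_ne.1 (Fin.strictMono_iff_lt_succ.1 hc i)⟩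
  have hmono : Monotone fun m => (∑ h ∈ range (m + 1), A ^ h).mulVec x :=
    monotone_nat_of_le_succ fun m i => ⟨(A ^ (m + 1)).mulVec x i, by
      rw [sum_range_succ _ (m + 1), Matrix.add_mulVec]; rfl⟩
  simpa only [Fintype.card_fin] using hmono.exists_le_card_mul_eq_succ hchain'
end

section
/- For every L ≥ 1 there exists a naturally ordered commutative semiring whose natural order has longest chain of length L, and for each n an n×n matrix A over it, such that A^{(k)} ≠ A^{(k+1)} for all k < nL (up to a constant factor); i.e., convergence requires Ω(nL) steps. -/
/-- `S` is naturally ordered: the relation `x ⪯ y ↔ ∃ z, x + z = y` is antisymmetric. -/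
def NaturallyOrdered (S : Type*) [CommSemiring S] : Prop :=
  ∀ x y : S, (∃ z, x + z = y) → (∃ z, y + z = x) → x = y

/-- `S` has a chain of length `m` in its natural order: `m` consecutive strict steps. -/
def HasChainOfLength (S : Type*) [CommSemiring S] (m : ℕ) : Prop :=
  ∃ c : Fin (m + 1) → S, ∀ i : Fin m,
    (∃ z, c i.castSucc + z = c i.succ) ∧ c i.castSucc ≠ c i.succ

/-- Over `S`, for every `n ≥ 1` there is an `n × n` matrix whose partial geometric sums
`A^{(m)} = Σ_{h=0}^m A^h` have not converged before `Ω(nL)` steps (with constant `c`). -/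
def MatrixLowerBound (S : Type*) [CommSemiring S] (L c : ℕ) : Prop :=
  ∀ n : ℕ, 1 ≤ n → ∃ A : Matrix (Fin n) (Fin n) S, ∀ k : ℕ, c * (k + 1) ≤ n * L →
    (∑ h ∈ Finset.range (k + 1), A ^ h) ≠ (∑ h ∈ Finset.range (k + 2), A ^ h)

/-
Take the max-plus semiring on `{𝒪, 0, 1, …, M}` whose multiplication is addition truncated at
`M = L - 1`. Its addition is the maximum of a linear order, so the natural order is that order,
its chains are strictly increasing sequences, and the longest one has `L + 1` elements.

On the `n`-cycle with weight `1` on the wrap-around edge and the unit `0` elsewhere, the walk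
of length `h` from vertex `0` wraps around `h / n` times, so the `(0, h mod n)` entry of `A ^ h`
is `min (h / n) M` and all other entries of that row are `𝒪`. While `(k + 1) / n ≤ M`, the
entry of `A ^ (k + 1)` at `(0, (k + 1) mod n)` is therefore strictly larger than the entries of
all earlier powers at that position, so adding it changes the partial sum.
-/

open Finset

theorem Nat.div_lt_div_of_lt_of_mod_eq {a b n : ℕ} (hab : a < b) (hmod : a % n = b % n) :
    a / n < b / n := by
  by_contra! hle
  have := Nat.mul_le_mul_left n hle
  have := Nat.div_add_mod a n
  have := Nat.div_add_mod b n
  omega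

theorem Matrix.pow_of_ite_apply {ι R : Type*} [Fintype ι] [DecidableEq ι] [CommSemiring R]
    (σ : ι → ι) (a : ι → R) (h : ℕ) (i j : ι) :
    ((Matrix.of fun i j => if σ i = j then a i else 0) ^ h) i j =
      if σ^[h] i = j then ∏ t ∈ range h, a (σ^[t] i) else 0 := by
  induction h generalizing i with
  | zero => simp only [pow_zero, Matrix.one_apply]; rfl
  | succ h ih =>
    simp only [pow_succ', Matrix.mul_apply, Matrix.of_apply, ite_mul, zero_mul]
    rw [sum_ite_eq, if_pos (mem_univ _), ih, Function.iterate_succ_apply, prod_range_succ',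
      Function.iterate_zero_apply, mul_ite, mul_zero, mul_comm]
    simp only [Function.iterate_succ_apply]

theorem prod_range_ite_dvd_succ {M : Type*} [CommMonoid M] (n : ℕ) (w : M) (h : ℕ) :
    ∏ t ∈ range h, (if n ∣ t + 1 then w else 1) = w ^ (h / n) := by
  induction h with
  | zero => simp
  | succ h ih => rw [prod_range_succ, ih, Nat.succ_div]; split_ifs <;> simp [pow_succ]

/-- The wrap-around edge `n - 1 → 0`, the only `i → i + 1` with `n ∣ i + 1`, has weight `w`. -/
def cycleMatrix {R : Type*} [Zero R] [One R] (n : ℕ) [NeZero n] (w : R) :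
    Matrix (Fin n) (Fin n) R :=
  Matrix.of fun i j => if i + 1 = j then (if n ∣ (i : ℕ) + 1 then w else 1) else 0

open Fin.NatCast in
theorem cycleMatrix_pow_apply_zero {R : Type*} [CommSemiring R] (n : ℕ) [NeZero n] (w : R)
    (h : ℕ) (j : Fin n) :
    (cycleMatrix n w ^ h) 0 j = if (h : Fin n) = j then w ^ (h / n) else 0 := by
  have hpath (t : ℕ) : (· + 1 : Fin n → Fin n)^[t] 0 = t := by
    rw [add_right_iterate_apply_zero, nsmul_one]
  have hwrap (t : ℕ) : n ∣ ((t : Fin n) : ℕ) + 1 ↔ n ∣ t + 1 := by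
    rw [Fin.val_natCast, Nat.dvd_iff_mod_eq_zero, Nat.mod_add_mod, ← Nat.dvd_iff_mod_eq_zero]
  rw [cycleMatrix, Matrix.pow_of_ite_apply (· + 1)]
  simp only [hpath, hwrap, prod_range_ite_dvd_succ]

section MaxAddition

variable {S : Type*} [CommSemiring S] [LinearOrder S]

theorem exists_add_eq_iff_le (hadd : ∀ x y : S, x + y = max x y) {x y : S} :
    (∃ z, x + z = y) ↔ x ≤ y := by
  refine ⟨fun ⟨z, hz⟩ => hz ▸ hadd x z ▸ le_max_left x z, fun h => ⟨y, ?_⟩⟩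
  rw [hadd, max_eq_right h]

theorem naturallyOrdered_of_add_eq_max (hadd : ∀ x y : S, x + y = max x y) :
    NaturallyOrdered S := fun _ _ hxy hyx =>
  le_antisymm ((exists_add_eq_iff_le hadd).1 hxy) ((exists_add_eq_iff_le hadd).1 hyx)

theorem hasChainOfLength_iff_exists_strictMono (hadd : ∀ x y : S, x + y = max x y) {m : ℕ} :
    HasChainOfLength S m ↔ ∃ c : Fin (m + 1) → S, StrictMono c := by
  simp only [HasChainOfLength, Fin.strictMono_iff_lt_succ, exists_add_eq_iff_le hadd,
    lt_iff_le_and_ne]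

theorem hasChainOfLength_iff_lt_card [Fintype S] (hadd : ∀ x y : S, x + y = max x y) {m : ℕ} :
    HasChainOfLength S m ↔ m < Fintype.card S := by
  rw [hasChainOfLength_iff_exists_strictMono hadd]
  refine ⟨fun ⟨c, hc⟩ => by simpa using Fintype.card_le_of_injective c hc.injective,
    fun h => ⟨_, (Fintype.orderIsoFinOfCardEq S rfl).strictMono.comp (Fin.strictMono_castLE h)⟩⟩

theorem zero_le_of_add_eq_max (hadd : ∀ x y : S, x + y = max x y) (x : S) : 0 ≤ x := by
  simpa [hadd] using zero_add x

theorem sum_lt_of_forall_lt (hadd : ∀ x y : S, x + y = max x y) {ι : Type*} {s : Finset ι}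
    {f : ι → S} {b : S} (hb : 0 < b) (hf : ∀ i ∈ s, f i < b) : ∑ i ∈ s, f i < b :=
  sum_induction f (· < b) (fun x y hx hy => hadd x y ▸ max_lt hx hy) hb hf

theorem ne_add_of_lt (hadd : ∀ x y : S, x + y = max x y) {x y : S} (h : x < y) : x ≠ x + y := by
  rw [hadd, max_eq_right h.le]
  exact h.ne

open Fin.NatCast in
theorem cycleMatrix_sum_range_ne [Nontrivial S] (hadd : ∀ x y : S, x + y = max x y)
    (n : ℕ) [NeZero n] {w : S} {k : ℕ}
    (hw : StrictMonoOn (w ^ ·) (Set.Iic ((k + 1) / n))) :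
    ∑ h ∈ range (k + 1), cycleMatrix n w ^ h ≠ ∑ h ∈ range (k + 2), cycleMatrix n w ^ h := by
  set Q := (k + 1) / n
  have hQ : 0 < w ^ Q := calc
    0 < 1 := (zero_le_of_add_eq_max hadd 1).lt_of_ne zero_ne_one
    _ = w ^ 0 := (pow_zero w).symm
    _ ≤ w ^ Q := hw.monotoneOn (Set.mem_Iic.2 Q.zero_le) (Set.mem_Iic.2 le_rfl) Q.zero_le
  have hbelow : ∀ h ∈ range (k + 1), (cycleMatrix n w ^ h) 0 (k + 1 : ℕ) < w ^ Q := by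
    intro h hh
    rw [cycleMatrix_pow_apply_zero]
    split_ifs with hmod
    · have hlt : h / n < Q := Nat.div_lt_div_of_lt_of_mod_eq (mem_range.1 hh)
        (by simpa only [Fin.ext_iff, Fin.val_natCast] using hmod)
      exact hw (Set.mem_Iic.2 hlt.le) (Set.mem_Iic.2 le_rfl) hlt
    · exact hQ
  intro heq
  have hentry := congrFun (congrFun heq 0) (k + 1 : ℕ)
  rw [sum_range_succ _ (k + 1), Matrix.add_apply, Matrix.sum_apply,
    cycleMatrix_pow_apply_zero, if_pos rfl] at hentry
  exact ne_add_of_lt hadd (sum_lt_of_forall_lt hadd hQ hbelow) hentry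

end MaxAddition

/-- `⊥` plays the role of `𝒪` and `↑a` that of `a ∈ {0, …, M}`; addition is `max`, and
multiplication adds exponents, truncated at `M`. -/
def TruncMaxPlus (M : ℕ) : Type := WithBot (Fin (M + 1))

namespace TruncMaxPlus

variable {M : ℕ}

def satAdd (a b : Fin (M + 1)) : Fin (M + 1) := ⟨min (a + b : ℕ) M, by omega⟩

theorem satAdd_assoc (a b c : Fin (M + 1)) : satAdd (satAdd a b) c = satAdd a (satAdd b c) := by
  simp only [satAdd, Fin.mk.injEq]; omega

theorem satAdd_comm (a b : Fin (M + 1)) : satAdd a b = satAdd b a := by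
  simp only [satAdd, Fin.mk.injEq]; omega

theorem zero_satAdd (a : Fin (M + 1)) : satAdd 0 a = a := by
  ext; simp only [satAdd, Fin.val_zero]; omega

theorem monotone_satAdd (a : Fin (M + 1)) : Monotone (satAdd a) := fun b c h => by
  simp only [satAdd, Fin.mk_le_mk]; rw [Fin.le_def] at h; omega

theorem map₂_satAdd_comm (x y : WithBot (Fin (M + 1))) :
    WithBot.map₂ satAdd x y = WithBot.map₂ satAdd y x :=
  Option.map₂_comm satAdd_comm

theorem map₂_satAdd_zero_left (x : WithBot (Fin (M + 1))) : WithBot.map₂ satAdd ↑0 x = x := by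
  cases x using WithBot.recBotCoe <;> simp [zero_satAdd]

theorem monotone_map₂_satAdd (x : WithBot (Fin (M + 1))) : Monotone (WithBot.map₂ satAdd x) := by
  cases x using WithBot.recBotCoe with
  | bot => exact monotone_const
  | coe a => exact (monotone_satAdd a).withBot_map

instance : LinearOrder (TruncMaxPlus M) := inferInstanceAs (LinearOrder (WithBot (Fin (M + 1))))
instance : Fintype (TruncMaxPlus M) := inferInstanceAs (Fintype (WithBot (Fin (M + 1))))
instance : Nontrivial (TruncMaxPlus M) := inferInstanceAs (Nontrivial (WithBot (Fin (M + 1))))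

instance : Zero (TruncMaxPlus M) := ⟨(⊥ : WithBot (Fin (M + 1)))⟩
instance : One (TruncMaxPlus M) := ⟨((0 : Fin (M + 1)) : WithBot (Fin (M + 1)))⟩
instance : Add (TruncMaxPlus M) := ⟨max⟩
instance : Mul (TruncMaxPlus M) := ⟨WithBot.map₂ satAdd⟩

instance : CommSemiring (TruncMaxPlus M) where
  add_assoc := max_assoc
  add_comm := max_comm
  zero_add := max_bot_left (α := WithBot (Fin (M + 1)))
  add_zero := max_bot_right (α := WithBot (Fin (M + 1)))
  nsmul := nsmulRec
  mul_assoc _ _ _ := Option.map₂_assoc satAdd_assoc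
  mul_comm := map₂_satAdd_comm
  one_mul := map₂_satAdd_zero_left
  mul_one x := (map₂_satAdd_comm _ _).trans (map₂_satAdd_zero_left x)
  zero_mul := WithBot.map₂_bot_left satAdd
  mul_zero := WithBot.map₂_bot_right satAdd
  left_distrib x _ _ := (monotone_map₂_satAdd x).map_max
  right_distrib x y z := (map₂_satAdd_comm _ z).trans <| (monotone_map₂_satAdd z).map_max.trans <|
    congrArg₂ max (map₂_satAdd_comm z x) (map₂_satAdd_comm z y)

theorem add_eq_max (x y : TruncMaxPlus M) : x + y = max x y := rfl

theorem card : Fintype.card (TruncMaxPlus M) = M + 2 :=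
  (Fintype.card_option (α := Fin (M + 1))).trans (by rw [Fintype.card_fin])

def trunc (a : ℕ) : TruncMaxPlus M :=
  ((⟨min a M, by omega⟩ : Fin (M + 1)) : WithBot (Fin (M + 1)))

theorem trunc_mul_trunc (a b : ℕ) : (trunc a * trunc b : TruncMaxPlus M) = trunc (a + b) :=
  congrArg WithBot.some (Fin.ext (by simp only [satAdd]; omega))

theorem trunc_one_pow (q : ℕ) : (trunc 1 : TruncMaxPlus M) ^ q = trunc q := by
  induction q with
  | zero => exact congrArg WithBot.some (Fin.ext (by simp))
  | succ q ih => rw [pow_succ, ih, trunc_mul_trunc]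

theorem strictMonoOn_trunc : StrictMonoOn (trunc : ℕ → TruncMaxPlus M) (Set.Iic M) :=
  fun a ha b hb hab =>
    WithBot.coe_lt_coe.2 (Fin.mk_lt_mk.2 (by simp only [Set.mem_Iic] at ha hb; omega))

end TruncMaxPlus

/-- For every `L ≥ 1` there exists a naturally ordered commutative semiring whose natural
order has longest chain of length `L`, together with, for each `n`, an `n × n` matrix over it
requiring `Ω(nL)` steps to converge. -/
theorem naturally_ordered_lower_bound (L : ℕ) (hL : 1 ≤ L) :
    ∃ (S : Type) (inst : CommSemiring S) (c : ℕ), 0 < c ∧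
      @NaturallyOrdered S inst ∧
      @HasChainOfLength S inst L ∧
      ¬ @HasChainOfLength S inst (L + 1) ∧
      @MatrixLowerBound S inst L c := by
  obtain ⟨M, rfl⟩ : ∃ M, L = M + 1 := ⟨L - 1, by omega⟩
  have hadd := TruncMaxPlus.add_eq_max (M := M)
  refine ⟨TruncMaxPlus M, inferInstance, 2, two_pos, naturallyOrdered_of_add_eq_max hadd,
    ?_, ?_, fun n hn => ?_⟩
  · rw [hasChainOfLength_iff_lt_card hadd, TruncMaxPlus.card]; omega
  · rw [hasChainOfLength_iff_lt_card hadd, TruncMaxPlus.card]; omega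
  have : NeZero n := ⟨by omega⟩
  refine ⟨cycleMatrix n (TruncMaxPlus.trunc 1), fun k hk => cycleMatrix_sum_range_ne hadd n ?_⟩
  have hQ : (k + 1) / n ≤ M :=
    Nat.lt_succ_iff.1 ((Nat.div_lt_iff_lt_mul (by omega)).2 (by linarith))
  simpa only [TruncMaxPlus.trunc_one_pow] using
    TruncMaxPlus.strictMonoOn_trunc.mono (Set.Iic_subset_Iic.2 hQ)
end

section
/- For any two finite multisets x, y of nonnegative extended reals and any p ≥ 0: min_p(min_p(x) ⊎ min_p(y)) = min_p(x ⊎ y), and min_p(min_p(x) + min_p(y)) = min_p(x + y). -/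
open scoped Classical ENNReal

/-!
Inserting into a multiset an element that already has `p + 1` elements below it does not change
its `p + 1` smallest elements. Every element of `y` outside `min_p y` dominates all of `min_p y`,
which then has `p + 1` elements, so `min_p y` may replace `y` in `s ⊎ y`; likewise a sum `u + v`
with `v ∉ min_p y` dominates the `p + 1` sums `u + b`, `b ∈ min_p y`, so `min_p y` may replace `y`
in `x + y`. By symmetry the same holds for `x`.
-/

/-- `min_p x`: the multiset of the `p+1` smallest elements of the multiset `x`
(all of `x` if `x` has at most `p+1` elements). -/
noncomputable def minp (p : ℕ) (x : Multiset ℝ≥0∞) : Multiset ℝ≥0∞ :=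
  ((x.sort (· ≤ ·)).take (p + 1) : List ℝ≥0∞)

/-- `x + y` as bags: the multiset of all pairwise sums `u + v`, `u ∈ x`, `v ∈ y`. -/
noncomputable def bagSum (x y : Multiset ℝ≥0∞) : Multiset ℝ≥0∞ :=
  x.bind fun u => y.map (u + ·)

section LinearOrder

variable {α : Type*} [LinearOrder α]

theorem List.take_orderedInsert_of_le_length_filter {a : α} {l : List α}
    (hl : l.Pairwise (· ≤ ·)) {n : ℕ} (hn : n ≤ (l.filter (· ≤ a)).length) :
    (l.orderedInsert (· ≤ ·) a).take n = l.take n := by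
  induction l generalizing n with
  | nil => simp_all
  | cons b l ih =>
    obtain ⟨hb, hl⟩ := List.pairwise_cons.1 hl
    cases n with
    | zero => simp
    | succ m =>
      have hba : b ≤ a := by
        by_contra hab
        have : (b :: l).filter (· ≤ a) = [] := by
          grind [List.filter_eq_nil_iff]
        simp [this] at hn
      have hins : (b :: l).orderedInsert (· ≤ ·) a = b :: l.orderedInsert (· ≤ ·) a := by
        by_cases hab : a ≤ b
        · obtain rfl := le_antisymm hab hba
          cases l with
          | nil => simp
          | cons c l => simp [hb c List.mem_cons_self]
        · simp [hab]
      rw [List.filter_cons_of_pos (by simpa using hba), List.length_cons] at hn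
      rw [hins, List.take_succ_cons, List.take_succ_cons, ih hl (by omega)]

theorem Multiset.sort_cons_eq_orderedInsert (a : α) (s : Multiset α) :
    (a ::ₘ s).sort (· ≤ ·) = (s.sort (· ≤ ·)).orderedInsert (· ≤ ·) a :=
  Quot.inductionOn s fun l => by simp [List.mergeSort_eq_insertionSort]

end LinearOrder

open Multiset

section minp

variable (p : ℕ)

theorem minp_cons_of_le_card_filter {a : ℝ≥0∞} {t : Multiset ℝ≥0∞}
    (h : p + 1 ≤ card (t.filter (· ≤ a))) : minp p (a ::ₘ t) = minp p t := by
  rw [← sort_eq t (· ≤ ·), filter_coe, coe_card] at h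
  rw [minp, minp, sort_cons_eq_orderedInsert,
    List.take_orderedInsert_of_le_length_filter (pairwise_sort _ _) h]

theorem minp_add_of_le_card_filter {s d : Multiset ℝ≥0∞}
    (h : ∀ a ∈ d, p + 1 ≤ card (s.filter (· ≤ a))) : minp p (s + d) = minp p s := by
  induction d using Multiset.induction_on with
  | empty => rw [add_zero]
  | cons a d ih =>
    rw [add_cons, minp_cons_of_le_card_filter, ih fun b hb => h b (mem_cons_of_mem hb)]
    exact (h a (mem_cons_self a d)).trans
      (card_le_card (filter_le_filter _ (le_add_right s d)))

theorem exists_minp_add_eq (x : Multiset ℝ≥0∞) :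
    ∃ d, minp p x + d = x ∧ ∀ a ∈ d, card (minp p x) = p + 1 ∧ ∀ b ∈ minp p x, b ≤ a := by
  set l := x.sort (· ≤ ·)
  refine ⟨(l.drop (p + 1) : List ℝ≥0∞), ?_, fun a ha => ⟨?_, fun b hb => ?_⟩⟩
  · rw [minp, coe_add, List.take_append_drop, sort_eq]
  · have : p + 1 < l.length := by
      by_contra hlen
      simp [List.drop_eq_nil_of_le (not_lt.1 hlen)] at ha
    rw [minp, coe_card, List.length_take, min_eq_left this.le]
  · have hl := pairwise_sort x (· ≤ ·)
    rw [← List.take_append_drop (p + 1) (x.sort (· ≤ ·)), List.pairwise_append] at hl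
    exact hl.2.2 b hb a ha

theorem minp_add_minp (s y : Multiset ℝ≥0∞) : minp p (s + minp p y) = minp p (s + y) := by
  obtain ⟨d, hd, hdom⟩ := exists_minp_add_eq p y
  conv_rhs => rw [← hd, ← add_assoc]
  refine (minp_add_of_le_card_filter p fun a ha => ?_).symm
  obtain ⟨hcard, hle⟩ := hdom a ha
  exact hcard ▸ card_le_card (le_filter.2 ⟨le_add_left _ _, hle⟩)

theorem bagSum_comm (x y : Multiset ℝ≥0∞) : bagSum x y = bagSum y x := by
  rw [bagSum, bagSum, bind_map_comm]
  simp only [add_comm]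

theorem minp_bagSum_minp_right (x y : Multiset ℝ≥0∞) :
    minp p (bagSum x (minp p y)) = minp p (bagSum x y) := by
  obtain ⟨d, hd, hdom⟩ := exists_minp_add_eq p y
  have hsplit : bagSum x y = bagSum x (minp p y) + bagSum x d := by
    conv_lhs => rw [← hd]
    simp only [bagSum, map_add, bind_add]
  rw [hsplit]
  refine (minp_add_of_le_card_filter p fun a ha => ?_).symm
  obtain ⟨u, hu, v, hv, rfl⟩ : ∃ u ∈ x, ∃ v ∈ d, u + v = a := by
    simpa [bagSum] using ha
  obtain ⟨hcard, hle⟩ := hdom v hv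
  have hsub : (minp p y).map (u + ·) ≤ (bagSum x (minp p y)).filter (· ≤ u + v) :=
    le_filter.2 ⟨le_bind x hu, by simpa using fun b hb => add_le_add_right (hle b hb) u⟩
  simpa [hcard] using card_le_card hsub

theorem minp_bagSum_minp_left (x y : Multiset ℝ≥0∞) :
    minp p (bagSum (minp p x) y) = minp p (bagSum x y) := by
  rw [bagSum_comm, minp_bagSum_minp_right, bagSum_comm]

end minp

/-- For any finite multisets `x, y` of nonnegative extended reals and any `p ≥ 0`:
`min_p(min_p(x) ⊎ min_p(y)) = min_p(x ⊎ y)` and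
`min_p(min_p(x) + min_p(y)) = min_p(x + y)` (pairwise sums). -/
theorem minp_identities (p : ℕ) (x y : Multiset ℝ≥0∞) :
    minp p (minp p x + minp p y) = minp p (x + y) ∧
    minp p (bagSum (minp p x) (minp p y)) = minp p (bagSum x y) := by
  constructor
  · rw [minp_add_minp, add_comm, minp_add_minp, add_comm]
  · rw [minp_bagSum_minp_right, minp_bagSum_minp_left]
end
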